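/- arXiv:math/0108090 — 3 statements merged into one kernel-verified Lean document; each statement's English description precedes it below -/
import Mathlib

section
/- Let f : [a,b] → ℝ be a regulated function (one-sided limits f(t-) and f(t+) exist at every point) and let 0 < p < ∞. Then the sum of the p-th powers of the jumps of f is bounded by its p-variation: ∑_{t ∈ (a,b]} |f(t) - f(t-)|^p + ∑_{t ∈ [a,b)} |f(t+) - f(t)|^p ≤ v_p(f;[a,b]). -/
/-!
Concatenating partitions shows that the `p`-variation is superadditive:
`V(a,c) + V(c,b) ≤ V(a,b)`. On one interval, the partition `a < u < v < b` together with
superadditivity gives `|f u - f a|^p + |f b - f v|^p ≤ V(a,b)`; letting `v → b⁻` and then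
`u → a⁺` bounds the right jump at `a` plus the left jump at `b`. Cutting `[a,b]` at finitely many
interior points and applying this on each piece bounds every finite partial sum of jumps, and
the sums over all jumps are the suprema of these.
-/

open Function Set Filter Topology
open scoped ENNReal

noncomputable def pVariation (f : ℝ → ℝ) (p a b : ℝ) : ℝ≥0∞ :=
  ⨆ (n : ℕ) (t : ℕ → ℝ) (_ : t 0 = a) (_ : t n = b) (_ : ∀ i < n, t i < t (i + 1)),
    ENNReal.ofReal (∑ i ∈ Finset.range n, |f (t (i + 1)) - f (t i)| ^ p)

section
variable {f : ℝ → ℝ} {p a b c : ℝ}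

theorem ofReal_sum_le_pVariation {n : ℕ} {t : ℕ → ℝ} (h0 : t 0 = a) (hn : t n = b)
    (ht : ∀ i < n, t i < t (i + 1)) :
    ENNReal.ofReal (∑ i ∈ Finset.range n, |f (t (i + 1)) - f (t i)| ^ p) ≤ pVariation f p a b :=
  le_iSup_of_le n <| le_iSup_of_le t <| le_iSup_of_le h0 <| le_iSup_of_le hn <|
    le_iSup_of_le ht le_rfl

theorem ofReal_abs_sub_rpow_le_pVariation (hab : a < b) :
    ENNReal.ofReal (|f b - f a| ^ p) ≤ pVariation f p a b := by
  simpa using ofReal_sum_le_pVariation (f := f) (p := p) (n := 1)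
    (t := fun i => if i = 0 then a else b) rfl rfl (by simpa using hab)

theorem exists_partition (hab : a ≤ b) :
    ∃ n : ℕ, ∃ t : ℕ → ℝ, t 0 = a ∧ t n = b ∧ ∀ i < n, t i < t (i + 1) := by
  rcases hab.lt_or_eq with hab | rfl
  · exact ⟨1, fun i => if i = 0 then a else b, rfl, rfl, by simpa using hab⟩
  · exact ⟨0, fun _ => a, rfl, rfl, by simp⟩

theorem exists_partition_append {n m : ℕ} {t s : ℕ → ℝ} (ht0 : t 0 = a) (htn : t n = c)
    (ht : ∀ i < n, t i < t (i + 1)) (hs0 : s 0 = c) (hsm : s m = b)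
    (hs : ∀ i < m, s i < s (i + 1)) :
    ∃ u : ℕ → ℝ, u 0 = a ∧ u (n + m) = b ∧ (∀ i < n + m, u i < u (i + 1)) ∧
      ∑ i ∈ Finset.range (n + m), |f (u (i + 1)) - f (u i)| ^ p =
        ∑ i ∈ Finset.range n, |f (t (i + 1)) - f (t i)| ^ p +
          ∑ i ∈ Finset.range m, |f (s (i + 1)) - f (s i)| ^ p := by
  set u : ℕ → ℝ := fun i => if i ≤ n then t i else s (i - n) with hu
  have hu_left : ∀ i ≤ n, u i = t i := fun i hi => if_pos hi
  have hu_right : ∀ j, u (n + j) = s j := by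
    rintro (_ | j)
    · simp [hu, htn, hs0]
    · simp [hu]
  refine ⟨u, hu_left 0 (Nat.zero_le n) ▸ ht0, hu_right m ▸ hsm, fun i hi => ?_, ?_⟩
  · rcases lt_or_ge i n with h | h
    · rw [hu_left i h.le, hu_left (i + 1) h]
      exact ht i h
    · obtain ⟨j, rfl⟩ := Nat.exists_eq_add_of_le h
      rw [hu_right, add_assoc, hu_right]
      exact hs j (by omega)
  · rw [Finset.sum_range_add]
    congr 1
    · refine Finset.sum_congr rfl fun i hi => ?_
      have hi := Finset.mem_range.1 hi
      rw [hu_left i hi.le, hu_left (i + 1) hi]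
    · refine Finset.sum_congr rfl fun j _ => ?_
      rw [add_assoc, hu_right, hu_right]

theorem pVariation_add_le (hac : a ≤ c) (hcb : c ≤ b) :
    pVariation f p a c + pVariation f p c b ≤ pVariation f p a b := by
  have h_eq (a b : ℝ) : pVariation f p a b =
      ⨆ (nt : ℕ × (ℕ → ℝ)) (_ : nt.2 0 = a ∧ nt.2 nt.1 = b ∧ ∀ i < nt.1, nt.2 i < nt.2 (i + 1)),
        ENNReal.ofReal (∑ i ∈ Finset.range nt.1, |f (nt.2 (i + 1)) - f (nt.2 i)| ^ p) := by
    simp only [pVariation, iSup_prod, iSup_and]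
  obtain ⟨n, t, ht⟩ := exists_partition hac
  obtain ⟨m, s, hs⟩ := exists_partition hcb
  rw [h_eq a c, h_eq c b]
  refine ENNReal.biSup_add_biSup_le' ⟨(n, t), ht⟩ ⟨(m, s), hs⟩ ?_
  rintro ⟨n, t⟩ ⟨ht0, htn, ht⟩ ⟨m, s⟩ ⟨hs0, hsm, hs⟩
  obtain ⟨u, hu0, hun, hu, hsum⟩ :=
    exists_partition_append (f := f) (p := p) ht0 htn ht hs0 hsm hs
  calc _ = ENNReal.ofReal (∑ i ∈ Finset.range (n + m), |f (u (i + 1)) - f (u i)| ^ p) := by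
        rw [hsum, ENNReal.ofReal_add] <;> positivity
    _ ≤ pVariation f p a b := ofReal_sum_le_pVariation hu0 hun hu

theorem tendsto_ofReal_abs_sub_rpow {α : Type*} {l : Filter α} {g : α → ℝ} {x y : ℝ}
    (hp : 0 ≤ p) (hg : Tendsto g l (𝓝 x)) :
    Tendsto (fun z => ENNReal.ofReal (|g z - y| ^ p)) l (𝓝 (ENNReal.ofReal (|x - y| ^ p))) :=
  ENNReal.tendsto_ofReal ((hg.sub_const y).abs.rpow_const (Or.inr hp))

theorem rightJump_add_leftJump_le_pVariation (hp : 0 ≤ p) (hab : a < b)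
    (ha : Tendsto f (𝓝[>] a) (𝓝 (rightLim f a))) (hb : Tendsto f (𝓝[<] b) (𝓝 (leftLim f b))) :
    ENNReal.ofReal (|rightLim f a - f a| ^ p) + ENNReal.ofReal (|f b - leftLim f b| ^ p) ≤
      pVariation f p a b := by
  have h_pair : ∀ u ∈ Ioo a b, ∀ v ∈ Ioo u b,
      ENNReal.ofReal (|f u - f a| ^ p) + ENNReal.ofReal (|f b - f v| ^ p) ≤ pVariation f p a b := by
    rintro u ⟨hau, hub⟩ v ⟨huv, hvb⟩
    calc _ ≤ pVariation f p a u + (pVariation f p u v + pVariation f p v b) :=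
          add_le_add (ofReal_abs_sub_rpow_le_pVariation hau)
            (le_add_left (ofReal_abs_sub_rpow_le_pVariation hvb))
      _ ≤ pVariation f p a u + pVariation f p u b :=
          add_le_add le_rfl (pVariation_add_le huv.le hvb.le)
      _ ≤ pVariation f p a b := pVariation_add_le hau.le hub.le
  have h_left : ∀ u ∈ Ioo a b,
      ENNReal.ofReal (|f u - f a| ^ p) + ENNReal.ofReal (|f b - leftLim f b| ^ p) ≤
        pVariation f p a b := by
    intro u hu
    have hlim : Tendsto (fun v => ENNReal.ofReal (|f b - f v| ^ p)) (𝓝[<] b)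
        (𝓝 (ENNReal.ofReal (|f b - leftLim f b| ^ p))) := by
      simpa only [abs_sub_comm (f b)] using tendsto_ofReal_abs_sub_rpow (y := f b) hp hb
    exact le_of_tendsto (tendsto_const_nhds.add hlim)
      (eventually_of_mem (Ioo_mem_nhdsLT hu.2) (h_pair u hu))
  exact le_of_tendsto ((tendsto_ofReal_abs_sub_rpow hp ha).add_const _)
    (eventually_of_mem (Ioo_mem_nhdsGT hab) h_left)

theorem jumps_sum_le_pVariation_of_finset (hp : 0 ≤ p) (hab : a < b)
    (hleft : ∀ t ∈ Ioc a b, Tendsto f (𝓝[<] t) (𝓝 (leftLim f t)))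
    (hright : ∀ t ∈ Ico a b, Tendsto f (𝓝[>] t) (𝓝 (rightLim f t)))
    (M : Finset ℝ) (hM : ↑M ⊆ Ioo a b) :
    ENNReal.ofReal (|rightLim f a - f a| ^ p) +
      ∑ x ∈ M, (ENNReal.ofReal (|f x - leftLim f x| ^ p) +
        ENNReal.ofReal (|rightLim f x - f x| ^ p)) +
      ENNReal.ofReal (|f b - leftLim f b| ^ p) ≤ pVariation f p a b := by
  classical
  induction M using Finset.induction_on_max generalizing b with
  | empty =>
    simpa using rightJump_add_leftJump_le_pVariation hp hab (hright a ⟨le_rfl, hab⟩)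
      (hleft b ⟨hab, le_rfl⟩)
  | insert c M hc ih =>
    have hcI : c ∈ Ioo a b := hM (Finset.mem_insert_self c M)
    have hcM : c ∉ M := fun h => lt_irrefl c (hc c h)
    have h_below := ih hcI.1 (fun t ht => hleft t (Ioc_subset_Ioc_right hcI.2.le ht))
      (fun t ht => hright t (Ico_subset_Ico_right hcI.2.le ht))
      (fun x hx => ⟨(hM (Finset.mem_insert_of_mem hx)).1, hc x hx⟩)
    have h_above := rightJump_add_leftJump_le_pVariation hp hcI.2 (hright c ⟨hcI.1.le, hcI.2⟩)
      (hleft b ⟨hcI.1.trans hcI.2, le_rfl⟩)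
    calc _ = (ENNReal.ofReal (|rightLim f a - f a| ^ p) +
            ∑ x ∈ M, (ENNReal.ofReal (|f x - leftLim f x| ^ p) +
              ENNReal.ofReal (|rightLim f x - f x| ^ p)) +
            ENNReal.ofReal (|f c - leftLim f c| ^ p)) +
          (ENNReal.ofReal (|rightLim f c - f c| ^ p) + ENNReal.ofReal (|f b - leftLim f b| ^ p)) := by
          rw [Finset.sum_insert hcM]; ring
      _ ≤ pVariation f p a c + pVariation f p c b := add_le_add h_below h_above
      _ ≤ pVariation f p a b := pVariation_add_le hcI.1.le hcI.2.le

theorem jumps_tsum_le_pVariation (hp : 0 ≤ p) (hab : a < b)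
    (hleft : ∀ t ∈ Ioc a b, Tendsto f (𝓝[<] t) (𝓝 (leftLim f t)))
    (hright : ∀ t ∈ Ico a b, Tendsto f (𝓝[>] t) (𝓝 (rightLim f t))) :
    ENNReal.ofReal (|rightLim f a - f a| ^ p) +
      ∑' x : Ioo a b, (ENNReal.ofReal (|f x - leftLim f x| ^ p) +
        ENNReal.ofReal (|rightLim f x - f x| ^ p)) +
      ENNReal.ofReal (|f b - leftLim f b| ^ p) ≤ pVariation f p a b := by
  rw [ENNReal.tsum_eq_iSup_sum, ENNReal.add_iSup, ENNReal.iSup_add]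
  refine iSup_le fun M => ?_
  have h := jumps_sum_le_pVariation_of_finset hp hab hleft hright (M.map (Embedding.subtype _))
    (by simp)
  rwa [Finset.sum_map] at h

end

/-- for a regulated function `f` on `[a,b]` and `0 < p < ∞`, the sum of the
`p`-th powers of the jumps of `f` is bounded by its `p`-variation (taken in `[0,∞]`). -/
theorem jump_sum_le_pVariation (a b : ℝ) (hab : a < b) (f : ℝ → ℝ) (p : ℝ) (hp : 0 < p)
    (hleft : ∀ t ∈ Set.Ioc a b, Tendsto f (𝓝[<] t) (𝓝 (leftLim f t)))
    (hright : ∀ t ∈ Set.Ico a b, Tendsto f (𝓝[>] t) (𝓝 (rightLim f t))) :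
    (∑' t : Set.Ioc a b, ENNReal.ofReal (|f ↑t - leftLim f ↑t| ^ p)) +
      (∑' t : Set.Ico a b, ENNReal.ofReal (|rightLim f ↑t - f ↑t| ^ p)) ≤
    ⨆ (n : ℕ) (t : ℕ → ℝ) (_ : t 0 = a) (_ : t n = b) (_ : ∀ i < n, t i < t (i + 1)),
      ENNReal.ofReal (∑ i ∈ Finset.range n, |f (t (i + 1)) - f (t i)| ^ p) := by
  have h_split {s : Set ℝ} {x : ℝ} (hx : x ∉ s) (g : ℝ → ℝ≥0∞) :
      ∑' y : ↑(s ∪ {x}), g y = ∑' y : s, g y + g x := by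
    rw [ENNReal.summable.tsum_union_disjoint (disjoint_singleton_right.2 hx) ENNReal.summable,
      tsum_singleton]
  rw [← Ioo_union_right hab, ← Ioo_union_left hab,
    h_split (fun h => h.2.false) (fun x => ENNReal.ofReal (|f x - leftLim f x| ^ p)),
    h_split (fun h => h.1.false) (fun x => ENNReal.ofReal (|rightLim f x - f x| ^ p))]
  calc _ = ENNReal.ofReal (|rightLim f a - f a| ^ p) +
        ∑' x : Ioo a b, (ENNReal.ofReal (|f x - leftLim f x| ^ p) +
          ENNReal.ofReal (|rightLim f x - f x| ^ p)) +
        ENNReal.ofReal (|f b - leftLim f b| ^ p) := by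
        rw [ENNReal.tsum_add]; ring
    _ ≤ _ := jumps_tsum_le_pVariation hp.le hab hleft hright
end

section
/- Let f : [a,b] → ℝ be a function of bounded p-variation for some 0 < p < ∞ (hence regulated), and let x ∈ (a,b]. Then lim_{z↑x} v_p(f;[z,x]) = |f(x) - f(x-)|^p. Similarly, for y ∈ [a,b), lim_{z↓y} v_p(f;[y,z]) = |f(y+) - f(y)|^p. -/
/-!
By superadditivity of the `p`-variation, `V z := v_p(f;[a,z])` is monotone and bounded, with
limit `L` as `z ↑ x`; for `z < u < x` one has `v_p(f;[z,u]) ≤ L - V z → 0`. This makes `f`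
Cauchy at `x-`, so `f(x-)` exists, and squeezes `v_p(f;[z,x])` between `|f x - f z|^p` and
`(L - V z) + sup_{z ≤ u < x} |f x - f u|^p`, obtained by splitting off the last step of a
partition. The one-sided limit at `y+` follows by reflecting `t ↦ -t`.
-/

open Function Set Filter Topology
open scoped ENNReal

/-- The `p`-variation of `f` on `[u,v]`, as a supremum in `[0,∞]` over all partitions
`u = t 0 < t 1 < ⋯ < t n = v`. -/
noncomputable def vpE (p : ℝ) (f : ℝ → ℝ) (u v : ℝ) : ℝ≥0∞ :=
  ⨆ (n : ℕ) (t : ℕ → ℝ) (_ : t 0 = u) (_ : t n = v) (_ : ∀ i < n, t i < t (i + 1)),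
    ENNReal.ofReal (∑ i ∈ Finset.range n, |f (t (i + 1)) - f (t i)| ^ p)

def IsPartition (u v : ℝ) (n : ℕ) (t : ℕ → ℝ) : Prop :=
  t 0 = u ∧ t n = v ∧ ∀ i < n, t i < t (i + 1)

noncomputable def pVarSum (p : ℝ) (f : ℝ → ℝ) (n : ℕ) (t : ℕ → ℝ) : ℝ :=
  ∑ i ∈ Finset.range n, |f (t (i + 1)) - f (t i)| ^ p

lemma pVarSum_succ (p : ℝ) (f : ℝ → ℝ) (n : ℕ) (t : ℕ → ℝ) :
    pVarSum p f (n + 1) t = pVarSum p f n t + |f (t (n + 1)) - f (t n)| ^ p :=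
  Finset.sum_range_succ _ _

lemma pVarSum_nonneg (p : ℝ) (f : ℝ → ℝ) (n : ℕ) (t : ℕ → ℝ) : 0 ≤ pVarSum p f n t :=
  Finset.sum_nonneg fun _ _ => Real.rpow_nonneg (abs_nonneg _) p

def appendAt (m : ℕ) (s t : ℕ → ℝ) (i : ℕ) : ℝ :=
  if i ≤ m then s i else t (i - m)

lemma appendAt_of_le {m i : ℕ} {s t : ℕ → ℝ} (hi : i ≤ m) : appendAt m s t i = s i :=
  if_pos hi

lemma appendAt_add {m : ℕ} {s t : ℕ → ℝ} (hst : s m = t 0) (j : ℕ) :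
    appendAt m s t (m + j) = t j := by
  rcases j.eq_zero_or_pos with rfl | hj
  · simpa [appendAt] using hst
  · simp [appendAt, show ¬ m + j ≤ m by omega]

lemma pVarSum_appendAt (p : ℝ) (f : ℝ → ℝ) {m n : ℕ} {s t : ℕ → ℝ} (hst : s m = t 0) :
    pVarSum p f (m + n) (appendAt m s t) = pVarSum p f m s + pVarSum p f n t := by
  rw [pVarSum, Finset.sum_range_add]
  congr 1
  · refine Finset.sum_congr rfl fun i hi => ?_
    have hi := Finset.mem_range.1 hi
    rw [appendAt_of_le hi.le, appendAt_of_le hi]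
  · refine Finset.sum_congr rfl fun j _ => ?_
    rw [add_assoc, appendAt_add hst, appendAt_add hst]

lemma pVarSum_reflect (p : ℝ) (f : ℝ → ℝ) (n : ℕ) (t : ℕ → ℝ) :
    pVarSum p (fun x => f (-x)) n (fun i => -t (n - i)) = pVarSum p f n t := by
  rw [pVarSum, pVarSum, ← Finset.sum_range_reflect (fun j => |f (t (j + 1)) - f (t j)| ^ p)]
  refine Finset.sum_congr rfl fun i hi => ?_
  have hi := Finset.mem_range.1 hi
  rw [show n - 1 - i + 1 = n - i by omega, show n - 1 - i = n - (i + 1) by omega, neg_neg,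
    neg_neg, abs_sub_comm]

namespace IsPartition

variable {u v w : ℝ} {m n : ℕ} {s t : ℕ → ℝ}

lemma strictMonoOn (h : IsPartition u v n t) : StrictMonoOn t (Iic n) :=
  strictMonoOn_Iic_of_lt_succ h.2.2

lemma left_le (h : IsPartition u v n t) {i : ℕ} (hi : i ≤ n) : u ≤ t i :=
  h.1 ▸ h.strictMonoOn.monotoneOn (Nat.zero_le n) hi (Nat.zero_le i)

lemma left_lt_right (h : IsPartition u v n t) (hn : 0 < n) : u < v :=
  h.1 ▸ h.2.1 ▸ h.strictMonoOn (Nat.zero_le n) (le_refl n) hn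

lemma single (huv : u < v) : IsPartition u v 1 (fun i => if i = 0 then u else v) :=
  ⟨rfl, rfl, fun i hi => by simpa [Nat.lt_one_iff.1 hi] using huv⟩

lemma append (hs : IsPartition u v m s) (ht : IsPartition v w n t) :
    IsPartition u w (m + n) (appendAt m s t) := by
  have hst : s m = t 0 := hs.2.1.trans ht.1.symm
  refine ⟨(appendAt_of_le (Nat.zero_le m)).trans hs.1, (appendAt_add hst n).trans ht.2.1,
    fun i hi => ?_⟩
  rcases lt_or_ge i m with him | hmi
  · rw [appendAt_of_le him.le, appendAt_of_le him]
    exact hs.2.2 i him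
  · obtain ⟨j, rfl⟩ := Nat.exists_eq_add_of_le hmi
    rw [appendAt_add hst, add_assoc, appendAt_add hst]
    exact ht.2.2 j (by omega)

lemma reflect (h : IsPartition u v n t) : IsPartition (-v) (-u) n (fun i => -t (n - i)) := by
  refine ⟨by simp [h.2.1], by simp [h.1], fun i hi => neg_lt_neg ?_⟩
  simpa [show n - (i + 1) + 1 = n - i by omega] using h.2.2 (n - (i + 1)) (by omega)

end IsPartition

section
variable {p : ℝ} {f : ℝ → ℝ} {u v w : ℝ}

lemma vpE_le_iff {c : ℝ≥0∞} :
    vpE p f u v ≤ c ↔ ∀ n t, IsPartition u v n t → ENNReal.ofReal (pVarSum p f n t) ≤ c := by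
  simp only [vpE, iSup_le_iff, IsPartition, and_imp, pVarSum]

lemma ofReal_pVarSum_le_vpE {n : ℕ} {t : ℕ → ℝ} (h : IsPartition u v n t) :
    ENNReal.ofReal (pVarSum p f n t) ≤ vpE p f u v :=
  vpE_le_iff.1 le_rfl n t h

lemma vpE_eq_biSup : vpE p f u v =
    ⨆ q : ℕ × (ℕ → ℝ), ⨆ _ : IsPartition u v q.1 q.2, ENNReal.ofReal (pVarSum p f q.1 q.2) :=
  le_antisymm (vpE_le_iff.2 fun n t h => le_iSup₂_of_le (n, t) h le_rfl)
    (iSup₂_le fun _ h => ofReal_pVarSum_le_vpE h)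

lemma ofReal_abs_sub_rpow_le_vpE (huv : u < v) :
    ENNReal.ofReal (|f v - f u| ^ p) ≤ vpE p f u v := by
  simpa [pVarSum] using ofReal_pVarSum_le_vpE (p := p) (f := f) (IsPartition.single huv)

lemma vpE_eq_zero_of_le (hvu : v ≤ u) : vpE p f u v = 0 := by
  refine nonpos_iff_eq_zero.1 (vpE_le_iff.2 fun n t h => ?_)
  rcases n.eq_zero_or_pos with rfl | hn
  · simp [pVarSum]
  · exact absurd (h.left_lt_right hn) hvu.not_gt

lemma vpE_add_vpE_le (huv : u ≤ v) (hvw : v ≤ w) :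
    vpE p f u v + vpE p f v w ≤ vpE p f u w := by
  rcases huv.eq_or_lt with rfl | huv
  · simp [vpE_eq_zero_of_le le_rfl]
  rcases hvw.eq_or_lt with rfl | hvw
  · simp [vpE_eq_zero_of_le le_rfl]
  rw [vpE_eq_biSup, vpE_eq_biSup]
  refine ENNReal.biSup_add_biSup_le' ⟨(1, _), IsPartition.single huv⟩
    ⟨(1, _), IsPartition.single hvw⟩
    fun q hs r ht => ?_
  rw [← ENNReal.ofReal_add (pVarSum_nonneg p f _ _) (pVarSum_nonneg p f _ _),
    ← pVarSum_appendAt p f (hs.2.1.trans ht.1.symm)]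
  exact ofReal_pVarSum_le_vpE (hs.append ht)

variable (p f) in
lemma monotone_vpE (a : ℝ) : Monotone (vpE p f a) := fun z w hzw => by
  rcases le_total z a with hza | haz
  · simp [vpE_eq_zero_of_le hza]
  · exact le_self_add.trans (vpE_add_vpE_le haz hzw)

variable (p f) in
lemma antitone_vpE_left (v : ℝ) : Antitone fun u => vpE p f u v := fun z u hzu => by
  rcases le_total v u with hvu | huv
  · simp [vpE_eq_zero_of_le hvu]
  · exact le_add_self.trans (vpE_add_vpE_le hzu huv)

variable (p f) in
lemma vpE_le_vpE_comp_neg (u v : ℝ) : vpE p f u v ≤ vpE p (fun x => f (-x)) (-v) (-u) :=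
  vpE_le_iff.2 fun n t h => by
    rw [← pVarSum_reflect]
    exact ofReal_pVarSum_le_vpE h.reflect

variable (p f) in
lemma vpE_comp_neg (u v : ℝ) : vpE p (fun x => f (-x)) (-v) (-u) = vpE p f u v := by
  have h := vpE_le_vpE_comp_neg p (fun x => f (-x)) (-v) (-u)
  simp only [neg_neg] at h
  exact le_antisymm h (vpE_le_vpE_comp_neg p f u v)

lemma vpE_le_iSup_add_iSup {z x : ℝ} (hzx : z < x) :
    vpE p f z x ≤
      (⨆ u ∈ Ico z x, vpE p f z u) + ⨆ u ∈ Ico z x, ENNReal.ofReal (|f x - f u| ^ p) := by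
  refine vpE_le_iff.2 fun n t h => ?_
  rcases n with _ | k
  · exact absurd (h.1.symm.trans h.2.1) hzx.ne
  have hk : t k ∈ Ico z x := ⟨h.left_le k.le_succ, h.2.1 ▸ h.2.2 k k.lt_succ_self⟩
  have hinit : IsPartition z (t k) k t := ⟨h.1, rfl, fun i hi => h.2.2 i (by omega)⟩
  rw [pVarSum_succ, ENNReal.ofReal_add (pVarSum_nonneg p f k t)
    (Real.rpow_nonneg (abs_nonneg _) p), h.2.1]
  exact add_le_add (le_iSup₂_of_le (t k) hk (ofReal_pVarSum_le_vpE hinit))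
    (le_iSup₂_of_le (t k) hk le_rfl)

end

lemma tendsto_biSup_Ico_nhdsLT {α β : Type*} [LinearOrder α] [TopologicalSpace α]
    [OrderTopology α] [NoMinOrder α] [CompleteLinearOrder β] [DenselyOrdered β]
    [TopologicalSpace β] [OrderTopology β] {g : α → β} {x : α} {l : β}
    (hg : Tendsto g (𝓝[<] x) (𝓝 l)) :
    Tendsto (fun z => ⨆ u ∈ Ico z x, g u) (𝓝[<] x) (𝓝 l) := by
  refine tendsto_order.2 ⟨fun e he => ?_, fun e he => ?_⟩
  · filter_upwards [(tendsto_order.1 hg).1 e he, self_mem_nhdsWithin] with z hz hzx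
    exact hz.trans_le (le_iSup₂_of_le z ⟨le_rfl, hzx⟩ le_rfl)
  · obtain ⟨m, hlm, hme⟩ := exists_between he
    obtain ⟨w, hwx, hw⟩ := mem_nhdsLT_iff_exists_Ioo_subset.1 ((tendsto_order.1 hg).2 m hlm)
    filter_upwards [Ioo_mem_nhdsLT hwx] with z hz
    exact (iSup₂_le fun u hu => (hw ⟨hz.1.trans_le hu.1, hu.2⟩ : g u < m).le).trans_lt hme

section
variable {p : ℝ} {f : ℝ → ℝ}

lemma tendsto_iSup_vpE_Ico_nhdsLT {a x : ℝ} (hax : a < x) (hbv : vpE p f a x ≠ ⊤) :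
    Tendsto (fun z => ⨆ u ∈ Ico z x, vpE p f z u) (𝓝[<] x) (𝓝 0) := by
  set V := vpE p f a
  set L := sSup (V '' Iio x)
  have hV : Tendsto V (𝓝[<] x) (𝓝 L) := (monotone_vpE p f a).tendsto_nhdsLT x
  have hVL : ∀ u < x, V u ≤ L := fun u hu => le_sSup (mem_image_of_mem V hu)
  have hL : L ≠ ⊤ :=
    ne_top_of_le_ne_top hbv (sSup_le (forall_mem_image.2 fun u hu => monotone_vpE p f a hu.le))
  have hgap : Tendsto (fun z => L - V z) (𝓝[<] x) (𝓝 0) := by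
    simpa using ENNReal.Tendsto.sub tendsto_const_nhds hV (Or.inl hL)
  have hbound : ∀ z ∈ Ioo a x, ⨆ u ∈ Ico z x, vpE p f z u ≤ L - V z := fun z hz =>
    iSup₂_le fun u hu => ENNReal.le_sub_of_add_le_left (ne_top_of_le_ne_top hL (hVL z hz.2))
      ((vpE_add_vpE_le hz.1.le hu.1).trans (hVL u hu.2))
  exact tendsto_of_tendsto_of_tendsto_of_le_of_le' tendsto_const_nhds hgap
    (Eventually.of_forall fun _ => zero_le)
    (eventually_of_mem (Ioo_mem_nhdsLT hax) hbound)

lemma exists_tendsto_nhdsLT_of_vpE_ne_top {a x : ℝ} (hax : a < x) (hp : 0 < p)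
    (hbv : vpE p f a x ≠ ⊤) : ∃ c, Tendsto f (𝓝[<] x) (𝓝 c) := by
  refine cauchy_map_iff_exists_tendsto.1 (Metric.cauchy_iff.2 ⟨map_neBot, fun ε hε => ?_⟩)
  have hεp : (0 : ℝ≥0∞) < ENNReal.ofReal (ε ^ p) :=
    ENNReal.ofReal_pos.2 (Real.rpow_pos_of_pos hε p)
  obtain ⟨z, hz, hzx⟩ := (((tendsto_order.1 (tendsto_iSup_vpE_Ico_nhdsLT hax hbv)).2 _
    hεp).and self_mem_nhdsWithin).exists
  have hinc : ∀ u ∈ Ioo z x, ∀ v ∈ Ioo z x, u < v → dist (f u) (f v) < ε := by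
    intro u hu v hv huv
    have hlt : ENNReal.ofReal (|f v - f u| ^ p) < ENNReal.ofReal (ε ^ p) :=
      calc _ ≤ vpE p f u v := ofReal_abs_sub_rpow_le_vpE huv
        _ ≤ vpE p f z v := antitone_vpE_left p f v hu.1.le
        _ ≤ ⨆ w ∈ Ico z x, vpE p f z w := le_iSup₂_of_le v ⟨hu.1.le.trans huv.le, hv.2⟩ le_rfl
        _ < _ := hz
    rw [ENNReal.ofReal_lt_ofReal_iff', Real.rpow_lt_rpow_iff (abs_nonneg _) hε.le hp] at hlt
    rw [Real.dist_eq, abs_sub_comm]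
    exact hlt.1
  refine ⟨f '' Ioo z x, image_mem_map (Ioo_mem_nhdsLT hzx), ?_⟩
  rintro _ ⟨u, hu, rfl⟩ _ ⟨v, hv, rfl⟩
  rcases lt_trichotomy u v with huv | rfl | hvu
  · exact hinc u hu v hv huv
  · simpa using hε
  · rw [dist_comm]
    exact hinc v hv u hu hvu

lemma tendsto_vpE_nhdsLT {a x : ℝ} (hax : a < x) (hp : 0 < p) (hbv : vpE p f a x ≠ ⊤) {c : ℝ}
    (hc : Tendsto f (𝓝[<] x) (𝓝 c)) :
    Tendsto (fun z => vpE p f z x) (𝓝[<] x) (𝓝 (ENNReal.ofReal (|f x - c| ^ p))) := by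
  have hjump : Tendsto (fun u => ENNReal.ofReal (|f x - f u| ^ p)) (𝓝[<] x)
      (𝓝 (ENNReal.ofReal (|f x - c| ^ p))) :=
    (ENNReal.continuous_ofReal.tendsto _).comp
      ((tendsto_const_nhds.sub hc).abs.rpow_const (Or.inr hp.le))
  have hupper := (tendsto_iSup_vpE_Ico_nhdsLT hax hbv).add (tendsto_biSup_Ico_nhdsLT hjump)
  rw [zero_add] at hupper
  exact tendsto_of_tendsto_of_tendsto_of_le_of_le' hjump hupper
    (eventually_mem_nhdsWithin.mono fun z hz => by
      simpa only [abs_sub_comm] using ofReal_abs_sub_rpow_le_vpE (p := p) (f := f) hz)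
    (eventually_mem_nhdsWithin.mono fun z hz => vpE_le_iSup_add_iSup hz)

lemma exists_tendsto_nhdsGT_of_vpE_ne_top {y b : ℝ} (hyb : y < b) (hp : 0 < p)
    (hbv : vpE p f y b ≠ ⊤) : ∃ c, Tendsto f (𝓝[>] y) (𝓝 c) := by
  rw [← vpE_comp_neg] at hbv
  obtain ⟨c, hc⟩ := exists_tendsto_nhdsLT_of_vpE_ne_top (neg_lt_neg hyb) hp hbv
  exact ⟨c, by simpa [comp_def] using hc.comp tendsto_neg_nhdsGT⟩

lemma tendsto_vpE_nhdsGT {y b : ℝ} (hyb : y < b) (hp : 0 < p) (hbv : vpE p f y b ≠ ⊤) {c : ℝ}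
    (hc : Tendsto f (𝓝[>] y) (𝓝 c)) :
    Tendsto (fun z => vpE p f y z) (𝓝[>] y) (𝓝 (ENNReal.ofReal (|c - f y| ^ p))) := by
  rw [← vpE_comp_neg] at hbv
  have hc' : Tendsto (fun x => f (-x)) (𝓝[<] (-y)) (𝓝 c) := hc.comp tendsto_neg_nhdsLT_neg
  have h := (tendsto_vpE_nhdsLT (neg_lt_neg hyb) hp hbv hc').comp tendsto_neg_nhdsGT
  simp only [comp_def, vpE_comp_neg, neg_neg] at h
  rwa [abs_sub_comm] at h

end

theorem pVariation_limit_at_jump_general (a b : ℝ) (f : ℝ → ℝ) (p : ℝ) (hp : 0 < p)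
    (hbv : vpE p f a b < ⊤) :
    (∀ x ∈ Set.Ioc a b,
      Tendsto (fun z => vpE p f z x) (𝓝[<] x)
        (𝓝 (ENNReal.ofReal (|f x - leftLim f x| ^ p)))) ∧
    (∀ y ∈ Set.Ico a b,
      Tendsto (fun z => vpE p f y z) (𝓝[>] y)
        (𝓝 (ENNReal.ofReal (|rightLim f y - f y| ^ p)))) := by
  refine ⟨fun x hx => ?_, fun y hy => ?_⟩
  · have hbv : vpE p f a x ≠ ⊤ := (monotone_vpE p f a hx.2 |>.trans_lt hbv).ne
    obtain ⟨c, hc⟩ := exists_tendsto_nhdsLT_of_vpE_ne_top hx.1 hp hbv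
    rw [leftLim_eq_of_tendsto hc]
    exact tendsto_vpE_nhdsLT hx.1 hp hbv hc
  · have hbv : vpE p f y b ≠ ⊤ := (antitone_vpE_left p f b hy.1 |>.trans_lt hbv).ne
    obtain ⟨c, hc⟩ := exists_tendsto_nhdsGT_of_vpE_ne_top hy.2 hp hbv
    rw [rightLim_eq_of_tendsto hc]
    exact tendsto_vpE_nhdsGT hy.2 hp hbv hc

/-- if `f` has bounded `p`-variation on `[a,b]` (hence is regulated), then for
`x ∈ (a,b]` one has `lim_{z↑x} v_p(f;[z,x]) = |f(x) - f(x-)|^p`, and for `y ∈ [a,b)` one has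
`lim_{z↓y} v_p(f;[y,z]) = |f(y+) - f(y)|^p`. -/
theorem pVariation_limit_at_jump (a b : ℝ) (hab : a < b) (f : ℝ → ℝ) (p : ℝ) (hp : 0 < p)
    (hbv : vpE p f a b < ⊤) :
    (∀ x ∈ Set.Ioc a b,
      Tendsto (fun z => vpE p f z x) (𝓝[<] x)
        (𝓝 (ENNReal.ofReal (|f x - leftLim f x| ^ p)))) ∧
    (∀ y ∈ Set.Ico a b,
      Tendsto (fun z => vpE p f y z) (𝓝[>] y)
        (𝓝 (ENNReal.ofReal (|rightLim f y - f y| ^ p)))) :=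
  pVariation_limit_at_jump_general a b f p hp hbv
end

section
/- Let f : [0,T] → ℝ be right-continuous and regulated, let 0 < p < ∞, and let D ⊆ [0,T] be a dense subset containing 0 and T. Then v_p(f;[0,T]) = sup{ ∑_{i=1}^n |f(x_i) - f(x_{i-1})|^p : 0 = x₀ < x₁ < ⋯ < x_n = T, x_i ∈ D for all i }. -/
open Function Set Filter Topology
open scoped ENNReal

/- Every partition sum of `f` is a limit of partition sums over partitions with points in `D`:
keep the endpoints and push each interior point to the right into `D`, which is possible because
`D` is dense. Right-continuity of `f` makes the values of `f` at the moved points converge, and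
the partition sum is continuous in these finitely many values. -/

noncomputable def partitionSum (p : ℝ) (f : ℝ → ℝ) (n : ℕ) (t : ℕ → ℝ) : ℝ :=
  ∑ i ∈ Finset.range n, |f (t (i + 1)) - f (t i)| ^ p

theorem tendsto_partitionSum {α : Type*} {l : Filter α} {p : ℝ} (hp : 0 ≤ p)
    {f : ℝ → ℝ} {n : ℕ} {s : α → ℕ → ℝ} {t : ℕ → ℝ}
    (h : ∀ i ≤ n, Tendsto (fun a ↦ f (s a i)) l (𝓝 (f (t i)))) :
    Tendsto (fun a ↦ partitionSum p f n (s a)) l (𝓝 (partitionSum p f n t)) :=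
  tendsto_finsetSum _ fun i hi ↦
    have hi : i < n := Finset.mem_range.mp hi
    ((h (i + 1) hi).sub (h i hi.le)).abs.rpow_const (.inr hp)

theorem mem_closure_inter_Ioi_of_Ioo_subset_closure {α : Type*} [TopologicalSpace α]
    [LinearOrder α] [OrderTopology α] [DenselyOrdered α] {D : Set α} {x b : α} (hxb : x < b)
    (hD : Ioo x b ⊆ closure D) :
    x ∈ closure (D ∩ Ioi x) := by
  have h : Ioo x b ⊆ closure (D ∩ Ioo x b) := fun y hy ↦ by
    simpa only [inter_comm] using isOpen_Ioo.inter_closure ⟨hy, hD hy⟩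
  have hx : x ∈ closure (Ioo x b) := by simp [closure_Ioo hxb.ne, hxb.le]
  exact closure_mono (inter_subset_inter_right _ Ioo_subset_Ioi_self)
    (closure_minimal h isClosed_closure hx)

section RightApprox

variable {D : Set ℝ} {n : ℕ} {t : ℕ → ℝ}

def rightApproxFilter (D : Set ℝ) (n : ℕ) (t : ℕ → ℝ) (i : ℕ) : Filter ℝ :=
  if 0 < i ∧ i < n then 𝓝[D ∩ Ioi (t i)] (t i) else pure (t i)

theorem rightApproxFilter_eq_nhdsWithin {i : ℕ} (h₁ : 0 < i) (h₂ : i < n) :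
    rightApproxFilter D n t i = 𝓝[D ∩ Ioi (t i)] (t i) :=
  if_pos ⟨h₁, h₂⟩

theorem rightApproxFilter_eq_pure {i : ℕ} (hi : ¬(0 < i ∧ i < n)) :
    rightApproxFilter D n t i = pure (t i) :=
  if_neg hi

theorem rightApproxFilter_neBot (hD : ∀ i, 0 < i → i < n → t i ∈ closure (D ∩ Ioi (t i)))
    (i : ℕ) : (rightApproxFilter D n t i).NeBot := by
  by_cases hi : 0 < i ∧ i < n
  · rw [rightApproxFilter_eq_nhdsWithin hi.1 hi.2, ← mem_closure_iff_nhdsWithin_neBot]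
    exact hD i hi.1 hi.2
  · rw [rightApproxFilter_eq_pure hi]
    infer_instance

theorem tendsto_rightApproxFilter {f : ℝ → ℝ}
    (hf : ∀ i, 0 < i → i < n → Tendsto f (𝓝[>] (t i)) (𝓝 (f (t i)))) (i : ℕ) :
    Tendsto f (rightApproxFilter D n t i) (𝓝 (f (t i))) := by
  by_cases hi : 0 < i ∧ i < n
  · rw [rightApproxFilter_eq_nhdsWithin hi.1 hi.2]
    exact (hf i hi.1 hi.2).mono_left (nhdsWithin_mono _ inter_subset_right)
  · rw [rightApproxFilter_eq_pure hi]
    exact tendsto_pure_nhds f (t i)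

theorem eventually_rightApproxFilter (ht : ∀ i < n, t i < t (i + 1)) (h0 : t 0 ∈ D)
    (hn : t n ∈ D) {i : ℕ} (hin : i ≤ n) :
    ∀ᶠ x in rightApproxFilter D n t i, x ∈ D ∧ t i ≤ x ∧ (i < n → x < t (i + 1)) := by
  by_cases hi : 0 < i ∧ i < n
  · rw [rightApproxFilter_eq_nhdsWithin hi.1 hi.2]
    filter_upwards [self_mem_nhdsWithin, nhdsWithin_le_nhds (Iio_mem_nhds (ht i hi.2))]
      with x ⟨hxD, hx⟩ hx'
    exact ⟨hxD, hx.le, fun _ ↦ hx'⟩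
  · rw [rightApproxFilter_eq_pure hi, eventually_pure]
    refine ⟨?_, le_rfl, ht i⟩
    obtain rfl | rfl : i = 0 ∨ i = n := by omega
    exacts [h0, hn]

theorem partitionSum_le_iSup_of_mem_closure {p : ℝ} (hp : 0 ≤ p) {f : ℝ → ℝ}
    (ht : ∀ i < n, t i < t (i + 1)) (h0 : t 0 ∈ D) (hn : t n ∈ D)
    (hD : ∀ i, 0 < i → i < n → t i ∈ closure (D ∩ Ioi (t i)))
    (hf : ∀ i, 0 < i → i < n → Tendsto f (𝓝[>] (t i)) (𝓝 (f (t i)))) :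
    ENNReal.ofReal (partitionSum p f n t) ≤
      ⨆ (s : ℕ → ℝ) (_ : s 0 = t 0) (_ : s n = t n) (_ : ∀ i < n, s i < s (i + 1))
        (_ : ∀ i ≤ n, s i ∈ D), ENNReal.ofReal (partitionSum p f n s) := by
  set L := rightApproxFilter D n t
  have : (pi L).NeBot := pi_neBot.2 (rightApproxFilter_neBot hD)
  have h_end : ∀ i, ¬(0 < i ∧ i < n) → ∀ᶠ s in pi L, s i = t i := fun i hi ↦
    (tendsto_eval_pi L i).eventually
      (show ∀ᶠ x in L i, x = t i by
        rw [show L i = pure (t i) from rightApproxFilter_eq_pure hi]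
        exact eventually_pure.2 rfl)
  have h_mem : ∀ᶠ s in pi L, ∀ i ≤ n, s i ∈ D ∧ t i ≤ s i ∧ (i < n → s i < t (i + 1)) :=
    (eventually_all_finite (finite_Iic n)).2 fun i hi ↦
      (tendsto_eval_pi L i).eventually (eventually_rightApproxFilter ht h0 hn hi)
  refine le_of_tendsto ((ENNReal.continuous_ofReal.tendsto _).comp (tendsto_partitionSum hp
    fun i _ ↦ (tendsto_rightApproxFilter hf i).comp (tendsto_eval_pi L i))) ?_
  filter_upwards [h_end 0 (by omega), h_end n (by omega), h_mem] with s hs0 hsn hs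
  have hs_lt : ∀ i < n, s i < s (i + 1) := fun i hi ↦
    ((hs i hi.le).2.2 hi).trans_le (hs (i + 1) hi).2.1
  exact le_iSup_of_le s (le_iSup_of_le hs0 (le_iSup_of_le hsn (le_iSup_of_le hs_lt
    (le_iSup_of_le (fun i hi ↦ (hs i hi).1) le_rfl))))

end RightApprox

theorem pVariation_dense_partitions_general (T : ℝ) (f : ℝ → ℝ) (p : ℝ) (hp : 0 < p)
    (D : Set ℝ) (hdense : Set.Icc 0 T ⊆ closure D)
    (h0D : (0 : ℝ) ∈ D) (hTD : T ∈ D)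
    (hrc : ∀ t ∈ Set.Ico (0 : ℝ) T, Tendsto f (𝓝[>] t) (𝓝 (f t))) :
    vpE p f 0 T =
      ⨆ (n : ℕ) (t : ℕ → ℝ) (_ : t 0 = 0) (_ : t n = T)
        (_ : ∀ i < n, t i < t (i + 1)) (_ : ∀ i ≤ n, t i ∈ D),
        ENNReal.ofReal (∑ i ∈ Finset.range n, |f (t (i + 1)) - f (t i)| ^ p) := by
  refine le_antisymm
    (iSup_le fun n ↦ iSup_le fun t ↦ iSup_le fun h0 ↦ iSup_le fun hn ↦ iSup_le fun ht ↦ ?_)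
    (iSup_mono fun n ↦ iSup_mono fun t ↦ iSup_mono fun _ ↦ iSup_mono fun _ ↦
      iSup_mono fun _ ↦ iSup_const_le)
  have hmono : StrictMonoOn t (Iic n) := strictMonoOn_Iic_of_lt_succ ht
  have hint : ∀ i, 0 < i → i < n → t i ∈ Ioo 0 T := fun i h₁ h₂ ↦
    ⟨h0 ▸ hmono (Nat.zero_le n) h₂.le h₁, hn ▸ hmono h₂.le (mem_Iic.2 le_rfl) h₂⟩
  have key := partitionSum_le_iSup_of_mem_closure hp.le ht (h0 ▸ h0D) (hn ▸ hTD)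
    (fun i h₁ h₂ ↦ mem_closure_inter_Ioi_of_Ioo_subset_closure (hint i h₁ h₂).2
      fun _ hy ↦ hdense ⟨(hint i h₁ h₂).1.le.trans hy.1.le, hy.2.le⟩)
    (fun i h₁ h₂ ↦ hrc _ ⟨(hint i h₁ h₂).1.le, (hint i h₁ h₂).2⟩)
  rw [h0, hn] at key
  exact key.trans (le_iSup_of_le n le_rfl)

/-- for a right-continuous regulated function `f` on `[0,T]`, a dense subset
`D ⊆ [0,T]` containing `0` and `T`, and `0 < p < ∞`, the `p`-variation of `f` on `[0,T]`
equals the supremum of partition sums over partitions whose points all lie in `D`. -/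
theorem pVariation_dense_partitions (T : ℝ) (hT : 0 < T) (f : ℝ → ℝ) (p : ℝ) (hp : 0 < p)
    (D : Set ℝ) (hD : D ⊆ Set.Icc 0 T) (hdense : Set.Icc 0 T ⊆ closure D)
    (h0D : (0 : ℝ) ∈ D) (hTD : T ∈ D)
    (hrc : ∀ t ∈ Set.Ico (0 : ℝ) T, Tendsto f (𝓝[>] t) (𝓝 (f t)))
    (hreg : ∀ t ∈ Set.Ioc (0 : ℝ) T, ∃ l, Tendsto f (𝓝[<] t) (𝓝 l)) :
    vpE p f 0 T =
      ⨆ (n : ℕ) (t : ℕ → ℝ) (_ : t 0 = 0) (_ : t n = T)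
        (_ : ∀ i < n, t i < t (i + 1)) (_ : ∀ i ≤ n, t i ∈ D),
        ENNReal.ofReal (∑ i ∈ Finset.range n, |f (t (i + 1)) - f (t i)| ^ p) :=
  pVariation_dense_partitions_general T f p hp D hdense h0D hTD hrc
end
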